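/- arXiv:2406.02760 — 7 statements merged into one kernel-verified Lean document; each statement's English description precedes it below -/
import Mathlib

section
/- Let λ ∈ (0,1], let v_1,…,v_s ∈ ℝ^n, and let C = conv{v_1,…,v_s} ⊆ 𝒳 be a C-set. Assume 𝒰 is convex. Then C is λ-contractive for the system if and only if there exist scalars λ_i ∈ [0,λ], nonnegative coefficients p_{ij} ∈ [0,1], and vectors u_i ∈ 𝒰 (for i,j = 1,…,s) such that A v_i + B u_i = Σ_{j=1}^s p_{ij} v_j and Σ_{j=1}^s p_{ij} ≤ λ_i for every i = 1,…,s. -/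
open Matrix Set Pointwise

/-- Extract finitely-supported convex weights from membership in the convex hull of
the range of a family indexed by `Fin s`. -/
lemma exists_weights_of_mem_convexHull_range {n s : ℕ} {v : Fin s → (Fin n → ℝ)}
    {x : Fin n → ℝ} (hx : x ∈ convexHull ℝ (Set.range v)) :
    ∃ w : Fin s → ℝ, (∀ i, 0 ≤ w i) ∧ ∑ i, w i = 1 ∧ ∑ i, w i • v i = x := by
  rw [convexHull_range_eq_exists_affineCombination] at hx
  obtain ⟨t, w, hw0, hw1, hx⟩ := hx
  rw [Finset.affineCombination_eq_linear_combination t v w hw1] at hx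
  refine ⟨fun i => if i ∈ t then w i else 0, ?_, ?_, ?_⟩
  · intro i
    by_cases hi : i ∈ t <;> simp [hi, hw0 i]
  · rw [Finset.sum_ite_mem, Finset.univ_inter, hw1]
  · rw [← hx]
    rw [show (∑ i ∈ t, w i • v i) = ∑ i : Fin s, (if i ∈ t then w i • v i else 0) by
      rw [Finset.sum_ite_mem, Finset.univ_inter]]
    apply Finset.sum_congr rfl
    intro i _
    by_cases hi : i ∈ t <;> simp [hi]

/-- A sub-convex combination of points of a convex set containing `0` is in the set. -/
lemma subconvex_mem {n s : ℕ} {C : Set (Fin n → ℝ)} (hCconv : Convex ℝ C)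
    (h0 : (0 : Fin n → ℝ) ∈ C) {v : Fin s → (Fin n → ℝ)} (hv : ∀ j, v j ∈ C)
    {q : Fin s → ℝ} (hq : ∀ j, 0 ≤ q j) (hs : ∑ j, q j ≤ 1) :
    ∑ j, q j • v j ∈ C := by
  have := hCconv.sum_mem (t := (Finset.univ : Finset (Option (Fin s))))
    (w := fun o => Option.elim o (1 - ∑ j, q j) q)
    (z := fun o => Option.elim o 0 v) ?_ ?_ ?_
  · simpa [Fintype.sum_option] using this
  · rintro (_ | j) _
    · simpa using hs
    · exact hq j
  · simp [Fintype.sum_option]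
  · rintro (_ | j) _
    · exact h0
    · exact hv j

/-- Theorem 2 (vertex controls): a polytopic C-set `C = conv{v₁,…,v_s} ⊆ 𝒳` is
`λ`-contractive for `x⁺ = Ax + Bu`, `u ∈ 𝒰`, iff there are vertex controls
`uᵢ ∈ 𝒰`, coefficients `pᵢⱼ ∈ [0,1]` and `λᵢ ∈ [0,λ]` with
`A vᵢ + B uᵢ = Σⱼ pᵢⱼ vⱼ` and `Σⱼ pᵢⱼ ≤ λᵢ`. -/
theorem stmt0 {n m s : ℕ}
    (A : Matrix (Fin n) (Fin n) ℝ) (B : Matrix (Fin n) (Fin m) ℝ)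
    (X : Set (Fin n → ℝ)) (U : Set (Fin m → ℝ))
    (lam : ℝ) (hlam : lam ∈ Set.Ioc (0 : ℝ) 1)
    (v : Fin s → (Fin n → ℝ))
    (C : Set (Fin n → ℝ)) (hC : C = convexHull ℝ (Set.range v))
    (hCX : C ⊆ X)
    (hCconv : Convex ℝ C) (hCcomp : IsCompact C)
    (hC0 : (0 : Fin n → ℝ) ∈ interior C)
    (hU : Convex ℝ U) :
    (∀ x ∈ C, ∃ u ∈ U, A.mulVec x + B.mulVec u ∈ lam • C) ↔
      (∃ (lams : Fin s → ℝ) (p : Fin s → Fin s → ℝ) (u : Fin s → (Fin m → ℝ)),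
        ∀ i, lams i ∈ Set.Icc (0 : ℝ) lam ∧ (∀ j, p i j ∈ Set.Icc (0 : ℝ) 1) ∧
          u i ∈ U ∧
          A.mulVec (v i) + B.mulVec (u i) = ∑ j, p i j • v j ∧
          ∑ j, p i j ≤ lams i) := by
  obtain ⟨hlam0, hlam1⟩ := hlam
  have hvC : ∀ i, v i ∈ C := fun i => hC ▸ subset_convexHull ℝ _ ⟨i, rfl⟩
  have h0C : (0 : Fin n → ℝ) ∈ C := interior_subset hC0
  constructor
  · intro h
    have key : ∀ i : Fin s, ∃ u ∈ U, ∃ w : Fin s → ℝ, (∀ j, 0 ≤ w j) ∧ ∑ j, w j = 1 ∧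
        A.mulVec (v i) + B.mulVec u = ∑ j, (lam * w j) • v j := by
      intro i
      obtain ⟨u, hu, hmem⟩ := h (v i) (hvC i)
      obtain ⟨c, hcC, hc⟩ := Set.mem_smul_set.mp hmem
      obtain ⟨w, hw0, hw1, hwc⟩ := exists_weights_of_mem_convexHull_range (hC ▸ hcC)
      refine ⟨u, hu, w, hw0, hw1, ?_⟩
      rw [← hc, ← hwc, Finset.smul_sum]
      simp [smul_smul]
    choose u hu w hw0 hw1 hw using key
    refine ⟨fun _ => lam, fun i j => lam * w i j, u, fun i => ?_⟩
    refine ⟨⟨le_of_lt hlam0, le_refl _⟩, fun j => ⟨mul_nonneg hlam0.le (hw0 i j), ?_⟩,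
      hu i, hw i, ?_⟩
    · calc lam * w i j ≤ 1 * w i j := by
            exact mul_le_mul_of_nonneg_right hlam1 (hw0 i j)
        _ = w i j := one_mul _
        _ ≤ ∑ k, w i k := Finset.single_le_sum (fun k _ => hw0 i k) (Finset.mem_univ j)
        _ = 1 := hw1 i
    · rw [← Finset.mul_sum, hw1 i, mul_one]
  · rintro ⟨lams, p, u, hcond⟩ x hx
    obtain ⟨w, hw0, hw1, hwx⟩ := exists_weights_of_mem_convexHull_range (hC ▸ hx)
    refine ⟨∑ i, w i • u i, hU.sum_mem (fun i _ => hw0 i) hw1 (fun i _ => (hcond i).2.2.1), ?_⟩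
    have hlin : A.mulVec x + B.mulVec (∑ i, w i • u i)
        = ∑ i, w i • (A.mulVec (v i) + B.mulVec (u i)) := by
      rw [← hwx]
      simp only [smul_add, Finset.sum_add_distrib]
      congr 1
      · rw [← Matrix.mulVecLin_apply]
        simp [map_sum, Matrix.mulVecLin_apply]
      · rw [← Matrix.mulVecLin_apply]
        simp [map_sum, Matrix.mulVecLin_apply]
    have hrw : ∑ i, w i • (A.mulVec (v i) + B.mulVec (u i))
        = ∑ j, (∑ i, w i * p i j) • v j := by
      have he : ∀ i, w i • (A.mulVec (v i) + B.mulVec (u i)) = ∑ j, (w i * p i j) • v j := by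
        intro i
        rw [(hcond i).2.2.2.1, Finset.smul_sum]
        simp [smul_smul]
      simp only [he, Finset.sum_smul]
      exact Finset.sum_comm
    rw [hlin, hrw]
    set q : Fin s → ℝ := fun j => ∑ i, w i * p i j with hq
    have hq0 : ∀ j, 0 ≤ q j := fun j =>
      Finset.sum_nonneg fun i _ => mul_nonneg (hw0 i) ((hcond i).2.1 j).1
    have hqsum : ∑ j, q j ≤ lam := by
      have : ∑ j, q j = ∑ i, w i * ∑ j, p i j := by
        rw [Finset.sum_comm]
        simp [Finset.mul_sum]
      rw [this]
      calc ∑ i, w i * ∑ j, p i j ≤ ∑ i, w i * lam := by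
            apply Finset.sum_le_sum
            intro i _
            exact mul_le_mul_of_nonneg_left
              (le_trans (hcond i).2.2.2.2 ((hcond i).1).2) (hw0 i)
        _ = lam := by rw [← Finset.sum_mul, hw1, one_mul]
    rw [Set.mem_smul_set_iff_inv_smul_mem₀ (ne_of_gt hlam0)]
    have : lam⁻¹ • ∑ j, q j • v j = ∑ j, (lam⁻¹ * q j) • v j := by
      rw [Finset.smul_sum]
      simp [smul_smul]
    rw [this]
    apply subconvex_mem hCconv h0C hvC
    · intro j
      exact mul_nonneg (inv_nonneg.mpr hlam0.le) (hq0 j)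
    · rw [← Finset.mul_sum, inv_mul_le_one₀ hlam0]
      exact hqsum
end

section
/- Let λ ∈ (0,1]. Assume 𝒰 ⊆ ℝ^m is convex with 0 ∈ 𝒰, and C ⊆ ℝ^n is convex with 0 ∈ C. Let V be an invertible n×n matrix whose columns v_1,…,v_n lie in C, let u_1,…,u_n ∈ 𝒰 satisfy A v_i + B u_i ∈ λC for each i, and let U be the m×n matrix with columns u_1,…,u_n. Then for every x ∈ S = conv{0, v_1,…,v_n}, the control u(x) = U V^{−1} x satisfies u(x) ∈ 𝒰 and A x + B U V^{−1} x ∈ λC. -/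
open Matrix Set Pointwise

/-- If the columns `vᵢ` of an invertible matrix `V` lie in a convex set `C ∋ 0`, and
admissible controls `uᵢ ∈ 𝒰` (with `𝒰` convex, `0 ∈ 𝒰`) satisfy `A vᵢ + B uᵢ ∈ λC`,
then for every `x` in the simplex `S = conv{0, v₁, …, vₙ}` the interpolated control
`u(x) = U V⁻¹ x` is admissible and steers the state into `λC`. -/
theorem stmt3 {n m : ℕ}
    (A : Matrix (Fin n) (Fin n) ℝ) (B : Matrix (Fin n) (Fin m) ℝ)
    (U : Set (Fin m → ℝ)) (C : Set (Fin n → ℝ))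
    (lam : ℝ) (hlam : lam ∈ Set.Ioc (0 : ℝ) 1)
    (hU : Convex ℝ U) (hU0 : (0 : Fin m → ℝ) ∈ U)
    (hC : Convex ℝ C) (hC0 : (0 : Fin n → ℝ) ∈ C)
    (V : Matrix (Fin n) (Fin n) ℝ) (hV : IsUnit V)
    (hVC : ∀ i, (fun r => V r i) ∈ C)
    (u : Fin n → (Fin m → ℝ)) (hu : ∀ i, u i ∈ U)
    (hstep : ∀ i, A.mulVec (fun r => V r i) + B.mulVec (u i) ∈ lam • C)
    (Umat : Matrix (Fin m) (Fin n) ℝ) (hUmat : Umat = Matrix.of fun r i => u i r)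
    (x : Fin n → ℝ)
    (hx : x ∈ convexHull ℝ (insert (0 : Fin n → ℝ) (Set.range fun i => fun r => V r i))) :
    (Umat * V⁻¹).mulVec x ∈ U ∧
    A.mulVec x + B.mulVec ((Umat * V⁻¹).mulVec x) ∈ lam • C := by
  have hdet : IsUnit V.det := (Matrix.isUnit_iff_isUnit_det V).mp hV
  have hVinv : V⁻¹ * V = 1 := Matrix.nonsing_inv_mul V hdet
  -- columns of V as mulVec of basis vectors
  have hcol : ∀ i, V.mulVec (Pi.single i 1) = fun r => V r i := by
    intro i; funext r
    simp [Matrix.mulVec_single]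
  have hkey : ∀ i, (Umat * V⁻¹).mulVec (fun r => V r i) = u i := by
    intro i
    rw [← hcol i, Matrix.mulVec_mulVec, Matrix.mul_assoc Umat V⁻¹ V, hVinv, Matrix.mul_one]
    funext r
    simp [hUmat, Matrix.mulVec_single]
  -- linear maps
  set L1 : (Fin n → ℝ) →ₗ[ℝ] (Fin m → ℝ) := (Umat * V⁻¹).mulVecLin with hL1
  set L2 : (Fin n → ℝ) →ₗ[ℝ] (Fin n → ℝ) := A.mulVecLin + B.mulVecLin ∘ₗ L1 with hL2
  have hL1app : ∀ y, L1 y = (Umat * V⁻¹).mulVec y := fun y => rfl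
  have hL2app : ∀ y, L2 y = A.mulVec y + B.mulVec ((Umat * V⁻¹).mulVec y) := fun y => rfl
  -- the target set is convex
  have hlamC : Convex ℝ (lam • C) := hC.smul lam
  have hlamC0 : (0 : Fin n → ℝ) ∈ lam • C := by
    have := Set.smul_mem_smul_set (a := lam) hC0
    simpa using this
  set T : Set (Fin n → ℝ) := L1 ⁻¹' U ∩ L2 ⁻¹' (lam • C) with hT
  have hTconv : Convex ℝ T :=
    (hU.linear_preimage L1).inter (hlamC.linear_preimage L2)
  have hsub : insert (0 : Fin n → ℝ) (Set.range fun i => fun r => V r i) ⊆ T := by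
    rintro y (rfl | ⟨i, rfl⟩)
    · constructor
      · show L1 0 ∈ U; rw [map_zero]; exact hU0
      · show L2 0 ∈ lam • C; rw [map_zero]; exact hlamC0
    · constructor
      · show L1 _ ∈ U; rw [hL1app, hkey i]; exact hu i
      · show L2 _ ∈ lam • C; rw [hL2app, hkey i]; exact hstep i
  have := convexHull_min hsub hTconv hx
  exact ⟨this.1, this.2⟩
end

section
/- Let Q be a symmetric positive semidefinite n×n matrix and R a symmetric positive semidefinite m×m matrix. Let C ⊆ 𝒳 be a C-set and let S_1,…,S_N be simplices with C = ∪_{k=1}^N S_k, where S_k = conv{0, v^k_1,…,v^k_n}, each v^k_i ∈ C, and the n×n matrix V_k with columns v^k_1,…,v^k_n is invertible. Assume 𝒰 is convex with 0 ∈ 𝒰, and for each k let u^k_1,…,u^k_n ∈ 𝒰 satisfy A v^k_i + B u^k_i ∈ C; let U_k be the m×n matrix with columns u^k_1,…,u^k_n, and set L_k = −U_k V_k^{−1}, A_k = A − B L_k, and Q_k = Q + L_k^T R L_k. Suppose there exist a symmetric positive definite n×n matrix P and symmetric n×n matrices W_k with all entries nonnegative such that A_k^T P A_k − P + Q_k +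 V_k^{−T} W_k V_k^{−1} is negative semidefinite for every k = 1,…,N. Then for every x ∈ C there exists u ∈ 𝒰 such that Ax + Bu ∈ C and (Ax+Bu)^T P (Ax+Bu) − x^T P x + x^T Q x + u^T R u ≤ 0. -/
open Matrix Set

/-- Weights for a point in the convex hull of `{0} ∪ range v`. -/
lemma aux_weights {E : Type} [AddCommGroup E] [Module ℝ E] {d : ℕ} (v : Fin d → E) {x : E}
    (hx : x ∈ convexHull ℝ (insert (0 : E) (Set.range v))) :
    ∃ lam : Fin d → ℝ, (∀ i, 0 ≤ lam i) ∧ ∑ i, lam i ≤ 1 ∧ x = ∑ i, lam i • v i := by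
  classical
  obtain ⟨ι, _, w, z, hw0, hw1, hz, hxz⟩ := mem_convexHull_iff_exists_fintype.1 hx
  let φ : ι → Option (Fin d) := fun i => if h : ∃ j, v j = z i then some h.choose else none
  have hz' : ∀ i, (φ i).elim 0 v = z i := by
    intro i
    by_cases h : ∃ j, v j = z i
    · simp only [φ, dif_pos h, Option.elim]
      exact h.choose_spec
    · have h2 := hz i
      simp only [Set.mem_insert_iff, Set.mem_range] at h2
      rcases h2 with h0 | ⟨j, hj⟩
      · simp [φ, dif_neg h, h0]
      · exact absurd ⟨j, hj⟩ h
  let μ : Option (Fin d) → ℝ := fun o => ∑ i ∈ Finset.univ.filter (fun i => φ i = o), w i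
  have hμ0 : ∀ o, 0 ≤ μ o := fun o => Finset.sum_nonneg fun i _ => hw0 i
  have hμsum : ∑ o, μ o = 1 := by
    rw [show (∑ o, μ o) = ∑ o, ∑ i ∈ Finset.univ.filter (fun i => φ i = o), w i from rfl,
      Finset.sum_fiberwise]
    exact hw1
  have hμx : ∑ o, μ o • o.elim 0 v = x := by
    rw [← hxz]
    have : ∀ o : Option (Fin d),
        μ o • o.elim 0 v = ∑ i ∈ Finset.univ.filter (fun i => φ i = o), w i • z i := by
      intro o
      simp only [μ]
      rw [Finset.sum_smul]
      refine Finset.sum_congr rfl fun i hi => ?_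
      rw [Finset.mem_filter] at hi
      rw [← hi.2, hz' i]
    rw [Finset.sum_congr rfl fun o _ => this o, Finset.sum_fiberwise]
  refine ⟨fun j => μ (some j), fun j => hμ0 _, ?_, ?_⟩
  · have h := hμsum
    rw [Fintype.sum_option] at h
    linarith [hμ0 none]
  · have h := hμx
    rw [Fintype.sum_option] at h
    simp only [Option.elim, smul_zero, zero_add] at h
    exact h.symm

/-- A sub-convex combination (total weight ≤ 1) of points of a convex set containing 0
stays in the set. -/
lemma aux_subcomb {E : Type} [AddCommGroup E] [Module ℝ E] {d : ℕ} {s : Set E}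
    (hs : Convex ℝ s) (h0 : (0 : E) ∈ s) (lam : Fin d → ℝ) (p : Fin d → E)
    (hlam0 : ∀ i, 0 ≤ lam i) (hlam1 : ∑ i, lam i ≤ 1) (hp : ∀ i, p i ∈ s) :
    ∑ i, lam i • p i ∈ s := by
  classical
  have := hs.sum_mem (t := (Finset.univ : Finset (Option (Fin d))))
    (w := fun o => o.elim (1 - ∑ i, lam i) lam) (z := fun o => o.elim 0 p)
    (fun o _ => by cases o with
      | none => simpa using by linarith
      | some j => exact hlam0 j)
    (by rw [Fintype.sum_option]; simp)
    (fun o _ => by cases o with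
      | none => exact h0
      | some j => exact hp j)
  rw [Fintype.sum_option] at this
  simpa using this

/-- Quadratic form conjugation. -/
lemma aux_quad {a b : ℕ} (M : Matrix (Fin a) (Fin b) ℝ) (S : Matrix (Fin a) (Fin a) ℝ)
    (x : Fin b → ℝ) :
    x ⬝ᵥ (Mᵀ * S * M).mulVec x = (M.mulVec x) ⬝ᵥ S.mulVec (M.mulVec x) := by
  rw [Matrix.mul_assoc, ← Matrix.mulVec_mulVec, Matrix.dotProduct_mulVec, Matrix.vecMul_transpose,
    Matrix.mulVec_mulVec]

/-- Theorem 3: quadratic upper bound on the cost-to-go.  If `C` is covered by simplices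
`S_k = conv{0, vᵏ₁,…,vᵏₙ}` with vertex controls `uᵏᵢ ∈ 𝒰` steering `A vᵏᵢ + B uᵏᵢ` into `C`,
and the semidefinite program in the theorem (with `L_k = −U_k V_k⁻¹`, `A_k = A − B L_k`,
`Q_k = Q + L_kᵀ R L_k`) has a feasible solution `P ≻ 0`, `W_k` symmetric elementwise
nonnegative, then for every `x ∈ C` there is `u ∈ 𝒰` with `Ax + Bu ∈ C` and
`(Ax+Bu)ᵀP(Ax+Bu) − xᵀPx + xᵀQx + uᵀRu ≤ 0`. -/
theorem stmt4 {n m N : ℕ}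
    (A : Matrix (Fin n) (Fin n) ℝ) (B : Matrix (Fin n) (Fin m) ℝ)
    (X : Set (Fin n → ℝ)) (U : Set (Fin m → ℝ))
    (Q : Matrix (Fin n) (Fin n) ℝ) (R : Matrix (Fin m) (Fin m) ℝ)
    (hQ : Q.PosSemidef) (hR : R.PosSemidef)
    (C : Set (Fin n → ℝ)) (hCX : C ⊆ X)
    (hCconv : Convex ℝ C) (hCcomp : IsCompact C) (hC0 : (0 : Fin n → ℝ) ∈ interior C)
    (hU : Convex ℝ U) (hU0 : (0 : Fin m → ℝ) ∈ U)
    (v : Fin N → Fin n → (Fin n → ℝ))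
    (hcover : C = ⋃ k, convexHull ℝ (insert (0 : Fin n → ℝ) (Set.range (v k))))
    (hvC : ∀ k i, v k i ∈ C)
    (V : Fin N → Matrix (Fin n) (Fin n) ℝ)
    (hV : ∀ k, V k = Matrix.of fun r i => v k i r)
    (hVinv : ∀ k, IsUnit (V k))
    (u : Fin N → Fin n → (Fin m → ℝ))
    (hu : ∀ k i, u k i ∈ U)
    (hstep : ∀ k i, A.mulVec (v k i) + B.mulVec (u k i) ∈ C)
    (Umat : Fin N → Matrix (Fin m) (Fin n) ℝ)
    (hUmat : ∀ k, Umat k = Matrix.of fun r i => u k i r)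
    (L : Fin N → Matrix (Fin m) (Fin n) ℝ)
    (hL : ∀ k, L k = -(Umat k * (V k)⁻¹))
    (Acl : Fin N → Matrix (Fin n) (Fin n) ℝ)
    (hAcl : ∀ k, Acl k = A - B * L k)
    (Qcl : Fin N → Matrix (Fin n) (Fin n) ℝ)
    (hQcl : ∀ k, Qcl k = Q + (L k)ᵀ * R * L k)
    (P : Matrix (Fin n) (Fin n) ℝ) (hP : P.PosDef)
    (W : Fin N → Matrix (Fin n) (Fin n) ℝ)
    (hWsymm : ∀ k, (W k).IsSymm)
    (hWpos : ∀ k i j, 0 ≤ W k i j)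
    (hLMI : ∀ k, ∀ x : Fin n → ℝ,
      x ⬝ᵥ ((Acl k)ᵀ * P * Acl k - P + Qcl k + ((V k)⁻¹)ᵀ * W k * (V k)⁻¹).mulVec x ≤ 0) :
    ∀ x ∈ C, ∃ u' ∈ U, A.mulVec x + B.mulVec u' ∈ C ∧
      (A.mulVec x + B.mulVec u') ⬝ᵥ P.mulVec (A.mulVec x + B.mulVec u') -
        x ⬝ᵥ P.mulVec x + x ⬝ᵥ Q.mulVec x + u' ⬝ᵥ R.mulVec u' ≤ 0 := by
  intro x hx
  -- Find the simplex containing x and its barycentric weights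
  have hx' : x ∈ ⋃ k, convexHull ℝ (insert (0 : Fin n → ℝ) (Set.range (v k))) := by
    rwa [← hcover]
  obtain ⟨k, hk⟩ := Set.mem_iUnion.1 hx'
  obtain ⟨lam, hlam0, hlam1, hxlam⟩ := aux_weights (v k) hk
  -- x = V_k lam
  have hxV : (V k).mulVec lam = x := by
    rw [hxlam]
    ext r
    simp only [Matrix.mulVec, dotProduct, hV k, Matrix.of_apply, Finset.sum_apply,
      Pi.smul_apply, smul_eq_mul]
    exact Finset.sum_congr rfl fun j _ => mul_comm _ _
  have hdet : IsUnit (V k).det := (Matrix.isUnit_iff_isUnit_det _).1 (hVinv k)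
  have hlamx : (V k)⁻¹.mulVec x = lam := by
    rw [← hxV, Matrix.mulVec_mulVec, Matrix.nonsing_inv_mul _ hdet, Matrix.one_mulVec]
  -- the control
  set u' : Fin m → ℝ := -(L k).mulVec x with hu'def
  have hu'sum : u' = ∑ j, lam j • u k j := by
    rw [hu'def, hL k, Matrix.neg_mulVec, neg_neg, ← Matrix.mulVec_mulVec, hlamx]
    ext r
    simp only [Matrix.mulVec, dotProduct, hUmat k, Matrix.of_apply, Finset.sum_apply,
      Pi.smul_apply, smul_eq_mul]
    exact Finset.sum_congr rfl fun j _ => mul_comm _ _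
  have hu'U : u' ∈ U := by
    rw [hu'sum]
    exact aux_subcomb hU hU0 lam (u k) hlam0 hlam1 (hu k)
  -- next state
  have hnext : A.mulVec x + B.mulVec u' = ∑ j, lam j • (A.mulVec (v k j) + B.mulVec (u k j)) := by
    rw [hxlam, hu'sum]
    have hA : A.mulVec (∑ j, lam j • v k j) = ∑ j, lam j • A.mulVec (v k j) := by
      rw [← Matrix.mulVecLin_apply, map_sum]
      exact Finset.sum_congr rfl fun j _ => by
        rw [Matrix.mulVecLin_apply, Matrix.mulVec_smul]
    have hB : B.mulVec (∑ j, lam j • u k j) = ∑ j, lam j • B.mulVec (u k j) := by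
      rw [← Matrix.mulVecLin_apply, map_sum]
      exact Finset.sum_congr rfl fun j _ => by
        rw [Matrix.mulVecLin_apply, Matrix.mulVec_smul]
    rw [hA, hB, ← Finset.sum_add_distrib]
    exact Finset.sum_congr rfl fun j _ => (smul_add _ _ _).symm
  have hnextC : A.mulVec x + B.mulVec u' ∈ C := by
    rw [hnext]
    exact aux_subcomb hCconv (interior_subset hC0) lam _ hlam0 hlam1 fun j => hstep k j
  refine ⟨u', hu'U, hnextC, ?_⟩
  -- the quadratic bound
  have hy : A.mulVec x + B.mulVec u' = (Acl k).mulVec x := by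
    rw [hAcl k, Matrix.sub_mulVec, ← Matrix.mulVec_mulVec, hu'def, Matrix.mulVec_neg]
    ring_nf
  have hlmi := hLMI k x
  rw [Matrix.add_mulVec, Matrix.add_mulVec, Matrix.sub_mulVec, dotProduct_add,
    dotProduct_add, dotProduct_sub, hQcl k, Matrix.add_mulVec,
    dotProduct_add, aux_quad (Acl k) P x, aux_quad (L k) R x, aux_quad ((V k)⁻¹) (W k) x]
    at hlmi
  have hWnn : 0 ≤ ((V k)⁻¹.mulVec x) ⬝ᵥ (W k).mulVec ((V k)⁻¹.mulVec x) := by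
    rw [hlamx]
    simp only [dotProduct, Matrix.mulVec]
    refine Finset.sum_nonneg fun i _ => mul_nonneg (hlam0 i) ?_
    exact Finset.sum_nonneg fun j _ => mul_nonneg (hWpos k i j) (hlam0 j)
  have hu'R : u' ⬝ᵥ R.mulVec u' = ((L k).mulVec x) ⬝ᵥ R.mulVec ((L k).mulVec x) := by
    rw [hu'def, Matrix.mulVec_neg, neg_dotProduct, dotProduct_neg, neg_neg]
  rw [hy, hu'R]
  linarith
end

section
/- Let A be a real n×n matrix, B a real n×m matrix, V an invertible real n×n matrix, U a real m×n matrix, P and Q symmetric n×n matrices, R a symmetric m×m matrix, and W a symmetric n×n matrix. Set L = −U V^{−1}, A_L = A − B L, and Q_L = Q + L^T R L. Then A_L^T P A_L − P + Q_L + V^{−T} W V^{−1} is negative semidefinite if and only if (A V + B U)^T P (A V + B U) + V^T (Q − P) V + U^T R U + W is negative semidefinite. -/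
open Matrix

/-- Congruence by `V`: with `L = −U V⁻¹`, `A_L = A − B L`, `Q_L = Q + Lᵀ R L`, the LMI
`A_Lᵀ P A_L − P + Q_L + V⁻ᵀ W V⁻¹ ⪯ 0` is equivalent to
`(A V + B U)ᵀ P (A V + B U) + Vᵀ (Q − P) V + Uᵀ R U + W ⪯ 0`. -/
theorem stmt6 {n m : ℕ}
    (A : Matrix (Fin n) (Fin n) ℝ) (B : Matrix (Fin n) (Fin m) ℝ)
    (V : Matrix (Fin n) (Fin n) ℝ) (hV : IsUnit V)
    (U : Matrix (Fin m) (Fin n) ℝ)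
    (P Q : Matrix (Fin n) (Fin n) ℝ) (hP : P.IsSymm) (hQ : Q.IsSymm)
    (R : Matrix (Fin m) (Fin m) ℝ) (hR : R.IsSymm)
    (W : Matrix (Fin n) (Fin n) ℝ) (hW : W.IsSymm)
    (L : Matrix (Fin m) (Fin n) ℝ) (hL : L = -(U * V⁻¹))
    (AL : Matrix (Fin n) (Fin n) ℝ) (hAL : AL = A - B * L)
    (QL : Matrix (Fin n) (Fin n) ℝ) (hQL : QL = Q + Lᵀ * R * L) :
    (∀ x : Fin n → ℝ, x ⬝ᵥ (ALᵀ * P * AL - P + QL + (V⁻¹)ᵀ * W * V⁻¹).mulVec x ≤ 0) ↔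
    (∀ x : Fin n → ℝ,
      x ⬝ᵥ ((A * V + B * U)ᵀ * P * (A * V + B * U) + Vᵀ * (Q - P) * V + Uᵀ * R * U + W).mulVec x
        ≤ 0) := by
  have hdet : IsUnit V.det := (Matrix.isUnit_iff_isUnit_det V).mp hV
  have hVV : V⁻¹ * V = 1 := Matrix.nonsing_inv_mul V hdet
  have hVV' : V * V⁻¹ = 1 := Matrix.mul_nonsing_inv V hdet
  have hLV : L * V = -U := by
    rw [hL, Matrix.neg_mul, Matrix.mul_assoc, hVV, Matrix.mul_one]
  have hALV : AL * V = A * V + B * U := by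
    rw [hAL, Matrix.sub_mul, Matrix.mul_assoc, hLV, Matrix.mul_neg, sub_neg_eq_add]
  set M : Matrix (Fin n) (Fin n) ℝ := ALᵀ * P * AL - P + QL + (V⁻¹)ᵀ * W * V⁻¹ with hM
  have key : Vᵀ * M * V =
      (A * V + B * U)ᵀ * P * (A * V + B * U) + Vᵀ * (Q - P) * V + Uᵀ * R * U + W := by
    have e1 : Vᵀ * (ALᵀ * P * AL) * V = (A * V + B * U)ᵀ * P * (A * V + B * U) := by
      rw [← hALV, Matrix.transpose_mul]
      noncomm_ring
    have e2 : Vᵀ * (Lᵀ * R * L) * V = Uᵀ * R * U := by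
      have : (L * V)ᵀ * R * (L * V) = Uᵀ * R * U := by
        rw [hLV]; simp [Matrix.neg_mul, Matrix.mul_neg]
      rw [← this, Matrix.transpose_mul]
      simp [Matrix.mul_assoc]
    have e3 : Vᵀ * ((V⁻¹)ᵀ * W * V⁻¹) * V = W := by
      rw [← Matrix.mul_assoc, ← Matrix.mul_assoc, ← Matrix.transpose_mul, hVV,
        Matrix.transpose_one, Matrix.one_mul, Matrix.mul_assoc, hVV, Matrix.mul_one]
    rw [hM, hQL]
    have expand : Vᵀ * (ALᵀ * P * AL - P + (Q + Lᵀ * R * L) + (V⁻¹)ᵀ * W * V⁻¹) * V =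
        Vᵀ * (ALᵀ * P * AL) * V + Vᵀ * (Q - P) * V + Vᵀ * (Lᵀ * R * L) * V +
          Vᵀ * ((V⁻¹)ᵀ * W * V⁻¹) * V := by
      noncomm_ring
    rw [expand, e1, e2, e3]
  have congr_eq : ∀ y : Fin n → ℝ,
      y ⬝ᵥ (Vᵀ * M * V).mulVec y = (V.mulVec y) ⬝ᵥ M.mulVec (V.mulVec y) := by
    intro y
    rw [Matrix.mul_assoc, ← Matrix.mulVec_mulVec, ← Matrix.mulVec_mulVec,
      Matrix.dotProduct_mulVec, Matrix.vecMul_transpose]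
  constructor
  · intro h x
    rw [← key, congr_eq]
    exact h _
  · intro h x
    have hx : V.mulVec (V⁻¹.mulVec x) = x := by
      rw [Matrix.mulVec_mulVec, hVV', Matrix.one_mulVec]
    have := h (V⁻¹.mulVec x)
    rw [← key, congr_eq, hx] at this
    exact this
end

section
/- Assume 𝒳 is closed and 𝒰 is compact. If C ⊆ 𝒳 is control invariant for the system, then the closure of C is control invariant for the system. -/
open Matrix Set

/-- If `𝒳` is closed and `𝒰` is compact and `C ⊆ 𝒳` is control invariant, then the
closure of `C` is control invariant. -/
theorem stmt9 {n m : ℕ}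
    (A : Matrix (Fin n) (Fin n) ℝ) (B : Matrix (Fin n) (Fin m) ℝ)
    (X : Set (Fin n → ℝ)) (U : Set (Fin m → ℝ))
    (hX : IsClosed X) (hU : IsCompact U)
    (C : Set (Fin n → ℝ)) (hCX : C ⊆ X)
    (hCI : ∀ x ∈ C, ∃ u ∈ U, A.mulVec x + B.mulVec u ∈ C) :
    closure C ⊆ X ∧
    ∀ x ∈ closure C, ∃ u ∈ U, A.mulVec x + B.mulVec u ∈ closure C := by
  have contA : Continuous A.mulVec := by
    have := A.mulVecLin.continuous_of_finiteDimensional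
    simpa [Matrix.coe_mulVecLin] using this
  have contB : Continuous B.mulVec := by
    have := B.mulVecLin.continuous_of_finiteDimensional
    simpa [Matrix.coe_mulVecLin] using this
  refine ⟨closure_minimal hCX hX, ?_⟩
  intro x hx
  obtain ⟨s, hs, hlim⟩ := mem_closure_iff_seq_limit.mp hx
  choose u hu hc using fun k => hCI (s k) (hs k)
  obtain ⟨v, hvU, φ, hφ, hvlim⟩ := hU.isSeqCompact hu
  refine ⟨v, hvU, ?_⟩
  have h1 : Filter.Tendsto (fun k => A.mulVec (s (φ k)) + B.mulVec (u (φ k)))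
      Filter.atTop (nhds (A.mulVec x + B.mulVec v)) :=
    (((contA.tendsto x).comp (hlim.comp hφ.tendsto_atTop)).add
      ((contB.tendsto v).comp hvlim))
  exact mem_closure_of_tendsto h1 (Filter.Eventually.of_forall fun k =>
    hc (φ k))
end

section
/- Assume: (A,B) is a reachable pair, i.e., the n×(nm) matrix [B, AB, …, A^{n−1}B] has rank n; Q is symmetric positive semidefinite with (Q^{1/2}, A) detectable, i.e., there exists a real n×n matrix K such that every complex eigenvalue of A − K Q^{1/2} has modulus strictly less than 1, where Q^{1/2} is the positive semidefinite square root of Q; R is symmetric positive definite; Q_T is symmetric positive definite; 𝒳, 𝒰, and X_T ⊆ 𝒳 are C-sets; and condition (c) holds. Let {x_t}_{t≥0} and {u_t}_{t≥0} be sequences such that x_0 ∈ X_0, for each t the control u_t is the first control û_0 of a feasible plan from x_t whose cost attains the infimum V(x_t), and x_{t+1} = A x_t + B u_t. Then x_t ∈ X_0 for all t ≥ 0 and x_t → 0 as t → ∞. -/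
open Matrix Set Filter
open scoped NNReal ENNReal

/-- A feasible plan of horizon `T` from state `x`: trajectories `xs, us` satisfying the
dynamics, state/input constraints, and the terminal constraint. -/
def feasiblePlan {n m : ℕ}
    (A : Matrix (Fin n) (Fin n) ℝ) (B : Matrix (Fin n) (Fin m) ℝ)
    (X : Set (Fin n → ℝ)) (U : Set (Fin m → ℝ)) (XT : Set (Fin n → ℝ)) (T : ℕ)
    (x : Fin n → ℝ) (xs : ℕ → Fin n → ℝ) (us : ℕ → Fin m → ℝ) : Prop :=
  xs 0 = x ∧
  (∀ k < T, xs (k + 1) = A.mulVec (xs k) + B.mulVec (us k)) ∧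
  (∀ k < T, xs k ∈ X) ∧ (∀ k < T, us k ∈ U) ∧ xs T ∈ XT

/-- The cost of a plan: `Σ_{k<T} (x̂ₖᵀQx̂ₖ + ûₖᵀRûₖ) + x̂_TᵀQ_Tx̂_T`. -/
def planCost {n m : ℕ}
    (Q : Matrix (Fin n) (Fin n) ℝ) (R : Matrix (Fin m) (Fin m) ℝ)
    (QT : Matrix (Fin n) (Fin n) ℝ) (T : ℕ)
    (xs : ℕ → Fin n → ℝ) (us : ℕ → Fin m → ℝ) : ℝ :=
  (∑ k ∈ Finset.range T, (xs k ⬝ᵥ Q.mulVec (xs k) + us k ⬝ᵥ R.mulVec (us k))) +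
    xs T ⬝ᵥ QT.mulVec (xs T)

/-- `X₀`: the set of states from which a feasible plan exists. -/
def X0set {n m : ℕ}
    (A : Matrix (Fin n) (Fin n) ℝ) (B : Matrix (Fin n) (Fin m) ℝ)
    (X : Set (Fin n → ℝ)) (U : Set (Fin m → ℝ)) (XT : Set (Fin n → ℝ)) (T : ℕ) :
    Set (Fin n → ℝ) :=
  {x | ∃ xs us, feasiblePlan A B X U XT T x xs us}

/-- `V(x)`: the infimum of the planning cost over feasible plans from `x`. -/
noncomputable def Vopt {n m : ℕ}
    (A : Matrix (Fin n) (Fin n) ℝ) (B : Matrix (Fin n) (Fin m) ℝ)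
    (X : Set (Fin n → ℝ)) (U : Set (Fin m → ℝ)) (XT : Set (Fin n → ℝ))
    (Q : Matrix (Fin n) (Fin n) ℝ) (R : Matrix (Fin m) (Fin m) ℝ)
    (QT : Matrix (Fin n) (Fin n) ℝ) (T : ℕ) (x : Fin n → ℝ) : ℝ :=
  sInf {c | ∃ xs us, feasiblePlan A B X U XT T x xs us ∧ c = planCost Q R QT T xs us}

section MPCHelpers
attribute [local instance] Matrix.linftyOpNormedAddCommGroup Matrix.linftyOpNormedRing
  Matrix.linftyOpNormedAlgebra

lemma dot_mulVec_nonneg' {n : ℕ} {Q : Matrix (Fin n) (Fin n) ℝ} (hQ : Q.PosSemidef)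
    (v : Fin n → ℝ) : 0 ≤ v ⬝ᵥ Q.mulVec v := by
  simpa using hQ.dotProduct_mulVec_nonneg v

noncomputable def msqrt {n : ℕ} {Q : Matrix (Fin n) (Fin n) ℝ} (hQ : Q.PosSemidef) :
    Matrix (Fin n) (Fin n) ℝ :=
  (hQ.1.eigenvectorUnitary : Matrix (Fin n) (Fin n) ℝ) *
    diagonal (Real.sqrt ∘ hQ.1.eigenvalues) *
    (star hQ.1.eigenvectorUnitary : Matrix (Fin n) (Fin n) ℝ)

lemma msqrt_mul_self {n : ℕ} {Q : Matrix (Fin n) (Fin n) ℝ} (hQ : Q.PosSemidef) :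
    msqrt hQ * msqrt hQ = Q := by
  have hUU : (star hQ.1.eigenvectorUnitary : Matrix (Fin n) (Fin n) ℝ) *
      (hQ.1.eigenvectorUnitary : Matrix (Fin n) (Fin n) ℝ) = 1 := Unitary.coe_star_mul_self _
  have hsp := hQ.1.spectral_theorem
  rw [Unitary.conjStarAlgAut_apply] at hsp
  unfold msqrt
  calc _ = (hQ.1.eigenvectorUnitary : Matrix (Fin n) (Fin n) ℝ) *
        (diagonal (Real.sqrt ∘ hQ.1.eigenvalues) *
        ((star hQ.1.eigenvectorUnitary : Matrix (Fin n) (Fin n) ℝ) *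
        (hQ.1.eigenvectorUnitary : Matrix (Fin n) (Fin n) ℝ)) *
        diagonal (Real.sqrt ∘ hQ.1.eigenvalues)) *
        (star hQ.1.eigenvectorUnitary : Matrix (Fin n) (Fin n) ℝ) := by simp only [mul_assoc]
    _ = (hQ.1.eigenvectorUnitary : Matrix (Fin n) (Fin n) ℝ) *
        Matrix.diagonal (RCLike.ofReal ∘ hQ.1.eigenvalues) *
        (star hQ.1.eigenvectorUnitary : Matrix (Fin n) (Fin n) ℝ) := by
        rw [hUU, mul_one, diagonal_mul_diagonal]
        congr 3
        ext i
        simp [Real.mul_self_sqrt (hQ.eigenvalues_nonneg i)]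
    _ = Q := hsp.symm

lemma msqrt_transpose {n : ℕ} {Q : Matrix (Fin n) (Fin n) ℝ} (hQ : Q.PosSemidef) :
    (msqrt hQ)ᵀ = msqrt hQ := by
  unfold msqrt
  simp [Matrix.transpose_mul, Matrix.star_eq_conjTranspose, mul_assoc]

lemma dot_mulVec_sqrt' {n : ℕ} {Q : Matrix (Fin n) (Fin n) ℝ} (hQ : Q.PosSemidef)
    (v : Fin n → ℝ) : v ⬝ᵥ Q.mulVec v = ((msqrt hQ).mulVec v) ⬝ᵥ ((msqrt hQ).mulVec v) := by
  conv_lhs => rw [← msqrt_mul_self hQ]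
  rw [← Matrix.mulVec_mulVec, Matrix.dotProduct_mulVec, ← Matrix.mulVec_transpose]
  congr 1
  rw [msqrt_transpose]

lemma tendsto_zero_of_dot_self' {n : ℕ} {g : ℕ → Fin n → ℝ}
    (h : Tendsto (fun t => g t ⬝ᵥ g t) atTop (nhds 0)) : Tendsto g atTop (nhds 0) := by
  rw [tendsto_pi_nhds]
  intro i
  have hsq : Tendsto (fun t => (g t i)^2) atTop (nhds 0) := by
    apply squeeze_zero (fun t => sq_nonneg _) (fun t => ?_) h
    have : (g t i)^2 ≤ ∑ j, (g t j)^2 :=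
      Finset.single_le_sum (f := fun j => (g t j)^2) (fun j _ => sq_nonneg _) (Finset.mem_univ i)
    simpa [dotProduct, sq] using this
  have h1 : Tendsto (fun t => |g t i|) atTop (nhds 0) := by
    have := (Real.continuous_sqrt.tendsto 0).comp hsq
    rw [Real.sqrt_zero] at this
    exact this.congr fun t => by rw [Function.comp_apply, Real.sqrt_sq_eq_abs]
  simpa using tendsto_zero_iff_abs_tendsto_zero _ |>.mpr h1

lemma scalar_recursion' {θ : ℝ} (hθ0 : 0 ≤ θ) (hθ1 : θ < 1) {b e : ℕ → ℝ}
    (hb : ∀ j, 0 ≤ b j) (he : Tendsto e atTop (nhds 0))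
    (hrec : ∀ j, b (j + 1) ≤ θ * b j + e j) : Tendsto b atTop (nhds 0) := by
  rw [Metric.tendsto_atTop]
  intro ε hε
  have honeθ : 0 < 1 - θ := by linarith
  have hε2 : 0 < ε * (1 - θ) / 2 := by positivity
  obtain ⟨J, hJ⟩ := (Metric.tendsto_atTop.mp he) (ε * (1 - θ) / 2) hε2
  have key : ∀ i, b (J + i) ≤ θ ^ i * b J + ε / 2 := by
    intro i
    induction i with
    | zero => simp; nlinarith [hb J]
    | succ i ih =>
      have heJ : e (J + i) ≤ ε * (1 - θ) / 2 := by
        have := hJ (J + i) (Nat.le_add_right _ _)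
        rw [Real.dist_eq] at this
        cases abs_lt.mp this with
        | intro h1 h2 => linarith
      have hstep : b (J + i + 1) ≤ θ * (θ ^ i * b J + ε / 2) + ε * (1 - θ) / 2 := by
        calc b (J + i + 1) ≤ θ * b (J + i) + e (J + i) := hrec (J + i)
        _ ≤ θ * (θ ^ i * b J + ε / 2) + ε * (1 - θ) / 2 := by
            have := mul_le_mul_of_nonneg_left ih hθ0
            linarith
      calc b (J + (i + 1)) = b (J + i + 1) := by ring_nf
      _ ≤ θ * (θ ^ i * b J + ε / 2) + ε * (1 - θ) / 2 := hstep
      _ = θ ^ (i+1) * b J + (θ * ε / 2 + ε * (1 - θ) / 2) := by ring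
      _ ≤ θ ^ (i+1) * b J + ε / 2 := by nlinarith
  have hgeo : Tendsto (fun i => θ ^ i * b J) atTop (nhds 0) := by
    simpa using (tendsto_pow_atTop_nhds_zero_of_lt_one hθ0 hθ1).mul_const (b J)
  obtain ⟨I, hI⟩ := (Metric.tendsto_atTop.mp hgeo) (ε / 2) (by positivity)
  refine ⟨J + I, fun t ht => ?_⟩
  have h1 : t - J ≥ I := by omega
  have h2 : t = J + (t - J) := by omega
  have h3 := key (t - J)
  have h4 := hI (t - J) h1
  rw [Real.dist_eq, sub_zero] at h4 ⊢
  rw [abs_of_nonneg (hb t)]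
  have h5 : θ ^ (t - J) * b J < ε / 2 := lt_of_le_of_lt (le_abs_self _) h4
  calc b t = b (J + (t - J)) := by rw [← h2]
  _ ≤ θ ^ (t - J) * b J + ε / 2 := h3
  _ < ε := by linarith

lemma nnnorm_map_ofReal' {n : ℕ} (M : Matrix (Fin n) (Fin n) ℝ) :
    ‖M.map Complex.ofReal‖₊ = ‖M‖₊ := by
  rw [Matrix.linfty_opNNNorm_def, Matrix.linfty_opNNNorm_def]
  congr 1
  ext i
  simp [Matrix.map_apply, Complex.nnnorm_real]

lemma exists_pow_norm_lt_one' {n : ℕ} (hn : 0 < n) (M : Matrix (Fin n) (Fin n) ℝ)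
    (hspec : ∀ z ∈ spectrum ℂ (M.map Complex.ofReal), ‖z‖ < 1) :
    ∃ k, 1 ≤ k ∧ ‖M ^ k‖ < 1 := by
  set Mc : Matrix (Fin n) (Fin n) ℂ := M.map Complex.ofReal with hMc
  haveI : Nonempty (Fin n) := ⟨⟨0, hn⟩⟩
  haveI : Nontrivial (Matrix (Fin n) (Fin n) ℂ) := inferInstance
  have hρ : spectralRadius ℂ Mc < ((1 : ℝ≥0) : ENNReal) := by
    apply spectrum.spectralRadius_lt_of_forall_lt
    intro z hz
    have := hspec z hz
    simpa [← NNReal.coe_lt_coe] using this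
  have hρ1 : spectralRadius ℂ Mc < 1 := by simpa using hρ
  have hgel := spectrum.pow_nnnorm_pow_one_div_tendsto_nhds_spectralRadius Mc
  have hev : ∀ᶠ k : ℕ in atTop, (‖Mc ^ k‖₊ : ENNReal) ^ (1 / (k:ℝ)) < 1 :=
    hgel.eventually_lt_const hρ1
  obtain ⟨k, hk, hk1⟩ := (hev.and (eventually_ge_atTop 1)).exists
  refine ⟨k, hk1, ?_⟩
  have hklt : ‖Mc ^ k‖₊ < 1 := by
    by_contra hge
    push_neg at hge
    have : (1 : ENNReal) ≤ (‖Mc ^ k‖₊ : ENNReal) ^ (1 / (k:ℝ)) := by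
      apply ENNReal.one_le_rpow (by exact_mod_cast hge) (by positivity)
    exact absurd hk (not_lt.mpr this)
  have hmp : (M.map Complex.ofReal) ^ k = (M ^ k).map Complex.ofReal := by
    have := (map_pow (Complex.ofRealHom.mapMatrix) M k).symm
    simp only [RingHom.mapMatrix_apply] at this
    exact this
  have heq : ‖Mc ^ k‖₊ = ‖M ^ k‖₊ := by
    rw [hMc, hmp, nnnorm_map_ofReal']
  rw [heq] at hklt
  exact_mod_cast hklt

lemma traj_formula' {n : ℕ} (M : Matrix (Fin n) (Fin n) ℝ) (x w : ℕ → Fin n → ℝ)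
    (h : ∀ t, x (t + 1) = M.mulVec (x t) + w t) (t p : ℕ) :
    x (t + p) = (M ^ p).mulVec (x t) +
      ∑ i ∈ Finset.range p, (M ^ (p - 1 - i)).mulVec (w (t + i)) := by
  induction p with
  | zero => simp
  | succ p ih =>
    have hto : t + (p + 1) = (t + p) + 1 := by ring
    rw [hto, h (t + p), ih]
    rw [Matrix.mulVec_add, Matrix.mulVec_mulVec, ← pow_succ']
    rw [Finset.sum_range_succ]
    have hmv : M.mulVec (∑ i ∈ Finset.range p, (M ^ (p - 1 - i)).mulVec (w (t + i)))
        = ∑ i ∈ Finset.range p, (M ^ (p + 1 - 1 - i)).mulVec (w (t + i)) := by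
      simp only [← Matrix.mulVecLin_apply, map_sum]
      apply Finset.sum_congr rfl
      intro i hi
      simp only [Matrix.mulVecLin_apply]
      rw [Matrix.mulVec_mulVec, ← pow_succ']
      have hip : i < p := Finset.mem_range.mp hi
      have hexp : p - 1 - i + 1 = p + 1 - 1 - i := by omega
      rw [hexp]
    rw [hmv]
    have hz : p + 1 - 1 - p = 0 := by omega
    rw [hz, pow_zero]
    simp only [Matrix.one_mulVec]
    abel

lemma tendsto_of_residues' {f : ℕ → ℝ} {k : ℕ} (hk : 1 ≤ k) (hf : ∀ j, 0 ≤ f j)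
    (h : ∀ s, s < k → Tendsto (fun j => f (j * k + s)) atTop (nhds 0)) :
    Tendsto f atTop (nhds 0) := by
  rw [Metric.tendsto_atTop]
  intro ε hε
  have hN : ∀ s : Fin k, ∃ N, ∀ j ≥ N, dist (f (j * k + s)) 0 < ε := fun s =>
    Metric.tendsto_atTop.mp (h s s.2) ε hε
  choose N hNs using hN
  set Nmax := Finset.univ.sup N with hNmax
  refine ⟨(Nmax + 1) * k, fun t ht => ?_⟩
  have hkpos : 0 < k := hk
  have hdiv : t = (t / k) * k + (t % k) := by
    conv_lhs => rw [← Nat.div_add_mod t k]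
    ring
  have hs : t % k < k := Nat.mod_lt t hkpos
  have hj : t / k ≥ N ⟨t % k, hs⟩ := by
    have h1 : Nmax + 1 ≤ t / k := (Nat.le_div_iff_mul_le hkpos).mpr ht
    have h2 : N ⟨t % k, hs⟩ ≤ Nmax := Finset.le_sup (Finset.mem_univ _)
    omega
  have := hNs ⟨t % k, hs⟩ (t / k) hj
  rw [hdiv]
  exact this
end MPCHelpers

section MainProof
attribute [local instance] Matrix.linftyOpNormedAddCommGroup Matrix.linftyOpNormedRing
  Matrix.linftyOpNormedAlgebra

section decrease
variable {n m : ℕ} (A : Matrix (Fin n) (Fin n) ℝ) (B : Matrix (Fin n) (Fin m) ℝ)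
    (X : Set (Fin n → ℝ)) (U : Set (Fin m → ℝ))
    (Q : Matrix (Fin n) (Fin n) ℝ) (R : Matrix (Fin m) (Fin m) ℝ)
    (QT : Matrix (Fin n) (Fin n) ℝ) (XT : Set (Fin n → ℝ)) (T : ℕ)

lemma planCost_nonneg (hQ : Q.PosSemidef) (hR : R.PosSemidef) (hQT : QT.PosSemidef)
    (xs : ℕ → Fin n → ℝ) (us : ℕ → Fin m → ℝ) : 0 ≤ planCost Q R QT T xs us := by
  unfold planCost
  have h1 : 0 ≤ ∑ k ∈ Finset.range T, (xs k ⬝ᵥ Q.mulVec (xs k) + us k ⬝ᵥ R.mulVec (us k)) :=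
    Finset.sum_nonneg fun k _ => add_nonneg (dot_mulVec_nonneg' hQ _) (dot_mulVec_nonneg' hR _)
  have h2 := dot_mulVec_nonneg' hQT (xs T)
  linarith

lemma Vopt_nonneg (hQ : Q.PosSemidef) (hR : R.PosSemidef) (hQT : QT.PosSemidef)
    (x : Fin n → ℝ) (hx : x ∈ X0set A B X U XT T) :
    0 ≤ Vopt A B X U XT Q R QT T x := by
  obtain ⟨xs, us, hfeas⟩ := hx
  unfold Vopt
  have hne : {c | ∃ xs' us', feasiblePlan A B X U XT T x xs' us' ∧
      c = planCost Q R QT T xs' us'}.Nonempty := ⟨planCost Q R QT T xs us, xs, us, hfeas, rfl⟩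
  apply le_csInf hne
  rintro c ⟨xs', us', _, rfl⟩
  exact planCost_nonneg Q R QT T hQ hR hQT xs' us'

lemma V_decrease (hT : 1 ≤ T) (hQ : Q.PosSemidef) (hR : R.PosSemidef) (hQT : QT.PosSemidef)
    (hXTX : XT ⊆ X)
    (hc : ∀ x ∈ XT, ∃ u ∈ U, A.mulVec x + B.mulVec u ∈ XT ∧
      (A.mulVec x + B.mulVec u) ⬝ᵥ QT.mulVec (A.mulVec x + B.mulVec u) -
        x ⬝ᵥ QT.mulVec x + x ⬝ᵥ Q.mulVec x + u ⬝ᵥ R.mulVec u ≤ 0)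
    {x : Fin n → ℝ} {xs : ℕ → Fin n → ℝ} {us : ℕ → Fin m → ℝ}
    (hfeas : feasiblePlan A B X U XT T x xs us) :
    Vopt A B X U XT Q R QT T (A.mulVec x + B.mulVec (us 0)) ≤
      planCost Q R QT T xs us - (x ⬝ᵥ Q.mulVec x + us 0 ⬝ᵥ R.mulVec (us 0)) := by
  obtain ⟨hx0, hdyn, hX, hU, hXT⟩ := hfeas
  obtain ⟨T', rfl⟩ : ∃ T', T = T' + 1 := ⟨T - 1, by omega⟩
  obtain ⟨u', hu'U, hu'XT, hu'cost⟩ := hc (xs (T' + 1)) hXT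
  set xp : Fin n → ℝ := A.mulVec (xs (T' + 1)) + B.mulVec u' with hxp
  set xs' : ℕ → Fin n → ℝ := fun k => if k < T' + 1 then xs (k + 1) else xp with hxs'
  set us' : ℕ → Fin m → ℝ := fun k => if k < T' then us (k + 1) else u' with hus'
  have hxs'_lt : ∀ k, k < T' + 1 → xs' k = xs (k + 1) := fun k hk => by simp only [hxs', if_pos hk]
  have hxs'_T : xs' (T' + 1) = xp := by simp [hxs']
  have hfeas' : feasiblePlan A B X U XT (T' + 1) (A.mulVec x + B.mulVec (us 0)) xs' us' := by
    refine ⟨?_, ?_, ?_, ?_, ?_⟩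
    · rw [hxs'_lt 0 (by omega), hdyn 0 (by omega), hx0]
    · intro k hk
      by_cases hk' : k < T'
      · rw [hxs'_lt (k+1) (by omega), hxs'_lt k (by omega), hdyn (k+1) (by omega)]
        simp [hus', hk']
      · have hkT : k = T' := by omega
        rw [hkT, hxs'_T, hxs'_lt T' (by omega)]
        simp [hus', hxp]
    · intro k hk
      rw [hxs'_lt k hk]
      by_cases hk1 : k + 1 < T' + 1
      · exact hX (k+1) hk1
      · have he : k + 1 = T' + 1 := by omega
        rw [he]
        exact hXTX hXT
    · intro k hk
      by_cases hk' : k < T'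
      · simp only [hus', if_pos hk']
        exact hU (k+1) (by omega)
      · simp only [hus', if_neg hk']
        exact hu'U
    · rw [hxs'_T]
      exact hu'XT
  have hcost : planCost Q R QT (T' + 1) xs' us' ≤
      planCost Q R QT (T' + 1) xs us - (x ⬝ᵥ Q.mulVec x + us 0 ⬝ᵥ R.mulVec (us 0)) := by
    unfold planCost
    rw [Finset.sum_range_succ (fun k => xs' k ⬝ᵥ Q.mulVec (xs' k) + us' k ⬝ᵥ R.mulVec (us' k)) T']
    rw [Finset.sum_range_succ' (fun k => xs k ⬝ᵥ Q.mulVec (xs k) + us k ⬝ᵥ R.mulVec (us k)) T']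
    have hsum_eq : ∑ k ∈ Finset.range T', (xs' k ⬝ᵥ Q.mulVec (xs' k) + us' k ⬝ᵥ R.mulVec (us' k))
        = ∑ k ∈ Finset.range T', (xs (k+1) ⬝ᵥ Q.mulVec (xs (k+1)) + us (k+1) ⬝ᵥ R.mulVec (us (k+1))) := by
      apply Finset.sum_congr rfl
      intro k hk
      have hk' : k < T' := Finset.mem_range.mp hk
      rw [hxs'_lt k (by omega)]
      simp [hus', hk']
    rw [hsum_eq]
    have h1 : xs' T' = xs (T' + 1) := hxs'_lt T' (by omega)
    have h2 : us' T' = u' := by simp [hus']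
    have h3 : xs' (T' + 1) = xp := hxs'_T
    rw [h1, h2, h3, hx0]
    linarith
  unfold Vopt
  refine le_trans (csInf_le ?_ ?_) hcost
  · refine ⟨0, ?_⟩
    rintro c ⟨xs'', us'', _, rfl⟩
    exact planCost_nonneg Q R QT (T' + 1) hQ hR hQT xs'' us''
  · exact ⟨xs', us', hfeas', rfl⟩
end decrease

/-- Theorem 1 (standard MPC stability): under reachability of `(A,B)`, detectability of
`(Q^{1/2},A)`, positive (semi)definiteness of the cost matrices, C-set constraints, and
condition (c) on the terminal pair `(X_T, Q_T)`, every closed-loop trajectory of the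
receding-horizon control law stays in `X₀` and converges to the origin. -/
theorem stmt13 {n m : ℕ}
    (A : Matrix (Fin n) (Fin n) ℝ) (B : Matrix (Fin n) (Fin m) ℝ)
    (X : Set (Fin n → ℝ)) (U : Set (Fin m → ℝ))
    (Q : Matrix (Fin n) (Fin n) ℝ) (R : Matrix (Fin m) (Fin m) ℝ)
    (QT : Matrix (Fin n) (Fin n) ℝ) (XT : Set (Fin n → ℝ))
    (T : ℕ) (hT : 1 ≤ T)
    -- (A,B) is a reachable pair
    (hreach : (Matrix.of fun (i : Fin n) (p : Fin n × Fin m) =>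
      ((A ^ (p.1 : ℕ)) * B) i p.2).rank = n)
    -- (a) cost matrices
    (hQ : Q.PosSemidef)
    (hdetect : ∃ K : Matrix (Fin n) (Fin n) ℝ,
      ∀ z ∈ spectrum ℂ ((A - K * ((hQ.1.eigenvectorUnitary : Matrix (Fin n) (Fin n) ℝ) *
        diagonal (Real.sqrt ∘ hQ.1.eigenvalues) *
        (star hQ.1.eigenvectorUnitary : Matrix (Fin n) (Fin n) ℝ))).map Complex.ofReal), ‖z‖ < 1)
    (hR : R.PosDef) (hQT : QT.PosDef)
    -- (b) C-set constraints
    (hX : Convex ℝ X ∧ IsCompact X ∧ (0 : Fin n → ℝ) ∈ interior X)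
    (hU : Convex ℝ U ∧ IsCompact U ∧ (0 : Fin m → ℝ) ∈ interior U)
    (hXTX : XT ⊆ X)
    (hXT : Convex ℝ XT ∧ IsCompact XT ∧ (0 : Fin n → ℝ) ∈ interior XT)
    -- (c) terminal pair condition
    (hc : ∀ x ∈ XT, ∃ u ∈ U, A.mulVec x + B.mulVec u ∈ XT ∧
      (A.mulVec x + B.mulVec u) ⬝ᵥ QT.mulVec (A.mulVec x + B.mulVec u) -
        x ⬝ᵥ QT.mulVec x + x ⬝ᵥ Q.mulVec x + u ⬝ᵥ R.mulVec u ≤ 0)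
    -- closed-loop trajectory under the receding-horizon control law
    (x : ℕ → Fin n → ℝ) (u : ℕ → Fin m → ℝ)
    (hx0 : x 0 ∈ X0set A B X U XT T)
    (hopt : ∀ t, ∃ xs us, feasiblePlan A B X U XT T (x t) xs us ∧
      planCost Q R QT T xs us = Vopt A B X U XT Q R QT T (x t) ∧ u t = us 0)
    (hdyn : ∀ t, x (t + 1) = A.mulVec (x t) + B.mulVec (u t)) :
    (∀ t, x t ∈ X0set A B X U XT T) ∧ Tendsto x atTop (nhds 0) := by
  have hmem : ∀ t, x t ∈ X0set A B X U XT T := by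
    intro t
    obtain ⟨xs, us, hfeas, _, _⟩ := hopt t
    exact ⟨xs, us, hfeas⟩
  refine ⟨hmem, ?_⟩
  rcases Nat.eq_zero_or_pos n with hn | hn
  · subst hn
    have hz : ∀ t, x t = 0 := fun t => funext fun i => i.elim0
    exact tendsto_const_nhds.congr fun t => (hz t).symm
  -- abbreviations
  have hRpsd : R.PosSemidef := hR.posSemidef
  have hQTpsd : QT.PosSemidef := hQT.posSemidef
  set ℓ : ℕ → ℝ := fun t => x t ⬝ᵥ Q.mulVec (x t) + u t ⬝ᵥ R.mulVec (u t) with hℓdef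
  -- Lyapunov decrease
  have hdec : ∀ t, Vopt A B X U XT Q R QT T (x (t + 1)) ≤
      Vopt A B X U XT Q R QT T (x t) - ℓ t := by
    intro t
    obtain ⟨xs, us, hfeas, hcost, hu⟩ := hopt t
    have hVd := V_decrease A B X U Q R QT XT T hT hQ hRpsd hQTpsd hXTX hc hfeas
    rw [hcost] at hVd
    rw [hdyn t, hu, hℓdef]
    simpa [hu] using hVd
  have hVnn : ∀ t, 0 ≤ Vopt A B X U XT Q R QT T (x t) := fun t =>
    Vopt_nonneg A B X U Q R QT XT T hQ hRpsd hQTpsd (x t) (hmem t)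
  have hℓnn : ∀ t, 0 ≤ ℓ t := fun t =>
    add_nonneg (dot_mulVec_nonneg' hQ _) (dot_mulVec_nonneg' hRpsd _)
  have hsumb : ∀ N : ℕ, ∑ t ∈ Finset.range N, ℓ t ≤ Vopt A B X U XT Q R QT T (x 0) := by
    have key : ∀ N : ℕ, ∑ t ∈ Finset.range N, ℓ t + Vopt A B X U XT Q R QT T (x N) ≤
        Vopt A B X U XT Q R QT T (x 0) := by
      intro N
      induction N with
      | zero => simp
      | succ N ih =>
        rw [Finset.sum_range_succ]
        have := hdec N
        linarith
    intro N
    have h1 := key N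
    have h2 := hVnn N
    linarith
  have hsummable : Summable ℓ := summable_of_sum_range_le hℓnn hsumb
  have hℓtend : Tendsto ℓ atTop (nhds 0) := hsummable.tendsto_atTop_zero
  have hQtend : Tendsto (fun t => x t ⬝ᵥ Q.mulVec (x t)) atTop (nhds 0) := by
    apply squeeze_zero (fun t => dot_mulVec_nonneg' hQ _) (fun t => ?_) hℓtend
    have := dot_mulVec_nonneg' hRpsd (u t)
    simp only [hℓdef]
    linarith
  have hRtend : Tendsto (fun t => u t ⬝ᵥ R.mulVec (u t)) atTop (nhds 0) := by
    apply squeeze_zero (fun t => dot_mulVec_nonneg' hRpsd _) (fun t => ?_) hℓtend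
    have := dot_mulVec_nonneg' hQ (x t)
    simp only [hℓdef]
    linarith
  have hg1 : Tendsto (fun t => (msqrt hQ).mulVec (x t)) atTop (nhds 0) :=
    tendsto_zero_of_dot_self' (hQtend.congr fun t => dot_mulVec_sqrt' hQ (x t))
  have hg2 : Tendsto (fun t => (msqrt hRpsd).mulVec (u t)) atTop (nhds 0) :=
    tendsto_zero_of_dot_self' (hRtend.congr fun t => dot_mulVec_sqrt' hRpsd (u t))
  -- u tends to zero
  have hdetSR : IsUnit (msqrt hRpsd).det := by
    have h1 : (msqrt hRpsd) * (msqrt hRpsd) = R := msqrt_mul_self hRpsd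
    have h2 : (0 : ℝ) < R.det := hR.det_pos
    rw [← h1, Matrix.det_mul] at h2
    exact isUnit_iff_ne_zero.mpr (by nlinarith)
  have hinvSR : (msqrt hRpsd)⁻¹ * (msqrt hRpsd) = 1 := Matrix.nonsing_inv_mul _ hdetSR
  have hcontSR : Continuous (fun v : Fin m → ℝ => ((msqrt hRpsd)⁻¹).mulVec v) := by
    have hcl := LinearMap.continuous_of_finiteDimensional (Matrix.mulVecLin ((msqrt hRpsd)⁻¹))
    exact hcl
  have hutend : Tendsto u atTop (nhds 0) := by
    have hcomp := (hcontSR.tendsto 0).comp hg2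
    rw [Matrix.mulVec_zero] at hcomp
    refine hcomp.congr fun t => ?_
    show ((msqrt hRpsd)⁻¹).mulVec ((msqrt hRpsd).mulVec (u t)) = u t
    rw [Matrix.mulVec_mulVec, hinvSR, Matrix.one_mulVec]
  -- dynamics rewritten with stable matrix
  obtain ⟨K, hK⟩ := hdetect
  set M : Matrix (Fin n) (Fin n) ℝ := A - K * (msqrt hQ) with hMdef
  set w : ℕ → Fin n → ℝ :=
    fun t => K.mulVec ((msqrt hQ).mulVec (x t)) + B.mulVec (u t) with hwdef
  have hwtend : Tendsto w atTop (nhds 0) := by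
    have hcK : Continuous (fun v : Fin n → ℝ => K.mulVec v) := by
      have hcl := LinearMap.continuous_of_finiteDimensional (Matrix.mulVecLin K)
      exact hcl
    have hcB : Continuous (fun v : Fin m → ℝ => B.mulVec v) := by
      have hcl := LinearMap.continuous_of_finiteDimensional (Matrix.mulVecLin B)
      exact hcl
    have h1 := (hcK.tendsto 0).comp hg1
    have h2 := (hcB.tendsto 0).comp hutend
    rw [Matrix.mulVec_zero] at h1 h2
    have h3 := h1.add h2
    rw [add_zero] at h3
    exact h3
  have hrec : ∀ t, x (t + 1) = M.mulVec (x t) + w t := by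
    intro t
    rw [hdyn t, hwdef, hMdef]
    simp only [Matrix.sub_mulVec, Matrix.mulVec_mulVec]
    abel
  -- stable power
  obtain ⟨k, hk1, hkn⟩ := exists_pow_norm_lt_one' hn M hK
  -- conclude via residues and scalar recursion
  apply tendsto_zero_iff_norm_tendsto_zero.mpr
  apply tendsto_of_residues' hk1 (fun j => norm_nonneg _)
  intro s hs
  apply scalar_recursion' (norm_nonneg (M ^ k)) hkn (b := fun j => ‖x (j * k + s)‖)
    (e := fun j => ∑ i ∈ Finset.range k, ‖M ^ (k - 1 - i)‖ * ‖w (j * k + s + i)‖)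
    (fun j => norm_nonneg _)
  · -- e tends to zero
    have hz : (0 : ℝ) = ∑ i ∈ Finset.range k, (0 : ℝ) := by simp
    rw [hz]
    apply tendsto_finset_sum
    intro i _
    have hφ : Tendsto (fun j => j * k + s + i) atTop atTop := by
      apply tendsto_atTop_mono (fun j => ?_) tendsto_id
      simp only [id_eq]
      have : j * 1 ≤ j * k := Nat.mul_le_mul_left j hk1
      omega
    have hwn : Tendsto (fun t => ‖w t‖) atTop (nhds 0) :=
      tendsto_zero_iff_norm_tendsto_zero.mp hwtend
    have := (hwn.comp hφ).const_mul ‖M ^ (k - 1 - i)‖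
    simpa using this
  · -- recursion inequality
    intro j
    have hidx : (j + 1) * k + s = (j * k + s) + k := by ring
    have htraj := traj_formula' M x w hrec (j * k + s) k
    rw [hidx, htraj]
    calc ‖(M ^ k).mulVec (x (j * k + s)) +
          ∑ i ∈ Finset.range k, (M ^ (k - 1 - i)).mulVec (w (j * k + s + i))‖
        ≤ ‖(M ^ k).mulVec (x (j * k + s))‖ +
          ‖∑ i ∈ Finset.range k, (M ^ (k - 1 - i)).mulVec (w (j * k + s + i))‖ :=
          norm_add_le _ _
      _ ≤ ‖M ^ k‖ * ‖x (j * k + s)‖ +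
          ∑ i ∈ Finset.range k, ‖(M ^ (k - 1 - i)).mulVec (w (j * k + s + i))‖ :=
          add_le_add (Matrix.linfty_opNorm_mulVec _ _) (norm_sum_le _ _)
      _ ≤ ‖M ^ k‖ * ‖x (j * k + s)‖ +
          ∑ i ∈ Finset.range k, ‖M ^ (k - 1 - i)‖ * ‖w (j * k + s + i)‖ := by
          apply add_le_add_right
          exact Finset.sum_le_sum fun i _ => Matrix.linfty_opNorm_mulVec _ _


end MainProof
end

section
/- Assume condition (c) holds. If ({x̂_k}_{k=0}^T, {û_k}_{k=0}^{T−1}) is a feasible plan from a state x, then the planning problem from x⁺ = A x + B û_0 also admits a feasible plan; in particular, if x ∈ X_0 then x⁺ ∈ X_0. -/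
open Matrix Set

/-- Recursive feasibility: under condition (c), if there is a feasible plan from `x`,
then there is a feasible plan from `x⁺ = Ax + Bû₀`. -/
theorem stmt14 {n m : ℕ}
    (A : Matrix (Fin n) (Fin n) ℝ) (B : Matrix (Fin n) (Fin m) ℝ)
    (X : Set (Fin n → ℝ)) (U : Set (Fin m → ℝ))
    (Q : Matrix (Fin n) (Fin n) ℝ) (R : Matrix (Fin m) (Fin m) ℝ)
    (QT : Matrix (Fin n) (Fin n) ℝ) (XT : Set (Fin n → ℝ)) (hXTX : XT ⊆ X)
    (T : ℕ) (hT : 1 ≤ T)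
    (hc : ∀ x ∈ XT, ∃ u ∈ U, A.mulVec x + B.mulVec u ∈ XT ∧
      (A.mulVec x + B.mulVec u) ⬝ᵥ QT.mulVec (A.mulVec x + B.mulVec u) -
        x ⬝ᵥ QT.mulVec x + x ⬝ᵥ Q.mulVec x + u ⬝ᵥ R.mulVec u ≤ 0)
    (x : Fin n → ℝ) (xs : ℕ → Fin n → ℝ) (us : ℕ → Fin m → ℝ)
    (hfeas : feasiblePlan A B X U XT T x xs us) :
    ∃ xs' us', feasiblePlan A B X U XT T (A.mulVec x + B.mulVec (us 0)) xs' us' := by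
  obtain ⟨hx0, hdyn, hX, hU, hXT⟩ := hfeas
  obtain ⟨u, hu, huXT, -⟩ := hc (xs T) hXT
  refine ⟨fun k => if k < T then xs (k + 1) else A.mulVec (xs T) + B.mulVec u,
    fun k => if k + 1 < T then us (k + 1) else u, ?_, ?_, ?_, ?_, ?_⟩
  · show (if 0 < T then xs (0 + 1) else _) = _
    rw [if_pos (by omega : 0 < T), hdyn 0 hT, hx0]
  · intro k hk
    rcases lt_or_eq_of_le (Nat.succ_le_of_lt hk) with h | h
    · simp only [h, hk, if_pos]
      exact hdyn (k + 1) h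
    · have hk1 : ¬ (k + 1 < T) := by omega
      simp only [hk1, if_neg, hk, if_pos, if_false]
      have : k + 1 = T := h
      rw [this]
  · intro k hk
    simp only [hk, if_pos]
    rcases lt_or_eq_of_le (Nat.succ_le_of_lt hk) with h | h
    · exact hX (k + 1) h
    · rw [show k + 1 = T from h]; exact hXTX hXT
  · intro k hk
    rcases lt_or_eq_of_le (Nat.succ_le_of_lt hk) with h | h
    · simp only [h, if_pos]; exact hU (k + 1) h
    · have hk1 : ¬ (k + 1 < T) := by omega
      simp only [hk1, if_false]; exact hu
  · simp only [lt_irrefl, if_false]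
    exact huXT
end
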